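/- Coherence of operational and denotational semantics: if Γ ⊢ M : A, the environment V is well-typed for Γ, and V ⊢ M ⇓^c v, then the denotation of the value v equals the denotation of the term M in the denotation of the environment V, i.e. ⟦v⟧ = ⟦M⟧_{⟦V⟧}. -/

import Mathlib

/-! # LFPL⁺: syntax, values, and big-step operational cost semantics -/

/-- LFPL⁺ types: diamond, unit, sums, tensor products, linear functions,
lists, lazy products, stacks, and binary trees. -/
inductive Tp : Type
  | dia : Tp
  | unit : Tp
  | sum (A B : Tp) : Tp
  | tens (A B : Tp) : Tp
  | arr (A B : Tp) : Tp
  | list (A : Tp) : Tp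
  | prod (A B : Tp) : Tp
  | stack (A : Tp) : Tp
  | tree (A : Tp) : Tp

/-- Typing contexts: a list of declarations; `none` marks an unusable slot
(used for context splitting in the affine type system). -/
abbrev Ctx := List (Option Tp)

/-- De Bruijn variable lookup. -/
inductive Lk : Ctx → Tp → Type
  | here {A : Tp} {G : Ctx} : Lk (some A :: G) A
  | there {o : Option Tp} {A : Tp} {G : Ctx} : Lk G A → Lk (o :: G) A

/-- Splitting a context into two halves (each declared variable is usable in
exactly one half): this enforces the affine discipline. -/
inductive Split : Ctx → Ctx → Ctx → Type
  | nil : Split [] [] []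
  | skip {G G1 G2} : Split G G1 G2 → Split (none :: G) (none :: G1) (none :: G2)
  | left {A : Tp} {G G1 G2} : Split G G1 G2 → Split (some A :: G) (some A :: G1) (none :: G2)
  | right {A : Tp} {G G1 G2} : Split G G1 G2 → Split (some A :: G) (none :: G1) (some A :: G2)

/-- Intrinsically typed LFPL⁺ terms: `Term G A` are the terms `M` with
`G ⊢ M : A`.  The `cons` and `node` constructors take an extra argument of
type `◆`; the step case of the list recursor is typed in a context containing
only the diamond, head, and recursive-result variables; the base case of the
tree recursor is typed in the empty context. -/
inductive Term : Ctx → Tp → Type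
  | var {G A} : Lk G A → Term G A
  | null {G} : Term G .unit
  | inj1 {G A B} : Term G A → Term G (.sum A B)
  | inj2 {G A B} : Term G B → Term G (.sum A B)
  | scase {G G1 G2 A B C} : Split G G1 G2 → Term G1 (.sum A B) →
      Term (some A :: G2) C → Term (some B :: G2) C → Term G C
  | pair {G G1 G2 A B} : Split G G1 G2 → Term G1 A → Term G2 B → Term G (.tens A B)
  | letp {G G1 G2 A B C} : Split G G1 G2 → Term G1 (.tens A B) →
      Term (some B :: some A :: G2) C → Term G C
  | lam {G A B} : Term (some A :: G) B → Term G (.arr A B)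
  | app {G G1 G2 A B} : Split G G1 G2 → Term G1 (.arr A B) → Term G2 A → Term G B
  | nil {G A} : Term G (.list A)
  | cons {G G1 G23 G2 G3 A} : Split G G1 G23 → Split G23 G2 G3 →
      Term G1 .dia → Term G2 A → Term G3 (.list A) → Term G (.list A)
  | lrec {G G1 G2 A B} : Split G G1 G2 → Term G1 (.list A) → Term G2 B →
      Term [some B, some A, some .dia] B → Term G B
  | record {G A B} : Term G A → Term G B → Term G (.prod A B)
  | proj1 {G A B} : Term G (.prod A B) → Term G A
  | proj2 {G A B} : Term G (.prod A B) → Term G B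
  | empty {G A} : Term G (.stack A)
  | push {G G1 G2 A} : Split G G1 G2 → Term G1 A → Term G2 (.stack A) → Term G (.stack A)
  | pop {G G1 G2 A B} : Split G G1 G2 → Term G1 (.stack A) → Term G2 B →
      Term (some (.stack A) :: some A :: G2) B → Term G B
  | leaf {G A} : Term G (.tree A)
  | node {G G1 G234 G2 G34 G3 G4 A} : Split G G1 G234 → Split G234 G2 G34 →
      Split G34 G3 G4 → Term G1 .dia → Term G2 A → Term G3 (.tree A) →
      Term G4 (.tree A) → Term G (.tree A)
  | trec {G A B} : Term G (.tree A) → Term ([] : Ctx) B →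
      Term [some B, some B, some A, some .dia] B → Term G B

mutual
  /-- LFPL⁺ values (intrinsically typed), defined mutually with environments.
  Function and lazy-pair closures capture an environment; list and tree values
  store no diamond component. -/
  inductive Value : Tp → Type
    | dia : Value .dia
    | null : Value .unit
    | record {G A B} : Env G → Term G A → Term G B → Value (.prod A B)
    | inj1 {A B} : Value A → Value (.sum A B)
    | inj2 {A B} : Value B → Value (.sum A B)
    | pair {A B} : Value A → Value B → Value (.tens A B)
    | clos {G A B} : Env G → Term (some A :: G) B → Value (.arr A B)
    | sempty {A} : Value (.stack A)
    | spush {A} : Value A → Value (.stack A) → Value (.stack A)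
    | nil {A} : Value (.list A)
    | cons {A} : Value A → Value (.list A) → Value (.list A)
    | leaf {A} : Value (.tree A)
    | node {A} : Value A → Value (.tree A) → Value (.tree A) → Value (.tree A)

  /-- Environments: a value for each declared variable of the context. -/
  inductive Env : Ctx → Type
    | nil : Env []
    | cons {A G} : Value A → Env G → Env (some A :: G)
    | skip {G} : Env G → Env (none :: G)
end

/-- Environment lookup. -/
def Env.lk : {G : Ctx} → {A : Tp} → Env G → Lk G A → Value A
  | _, _, .cons v _, .here => v
  | _, _, .cons _ V, .there l => V.lk l
  | _, _, .skip V, .there l => V.lk l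

/-- First half of an environment along a context split. -/
def Env.split1 : {G G1 G2 : Ctx} → Split G G1 G2 → Env G → Env G1
  | _, _, _, .nil, _ => .nil
  | _, _, _, .skip s, .skip V => .skip (V.split1 s)
  | _, _, _, .left s, .cons v V => .cons v (V.split1 s)
  | _, _, _, .right s, .cons _ V => .skip (V.split1 s)

/-- Second half of an environment along a context split. -/
def Env.split2 : {G G1 G2 : Ctx} → Split G G1 G2 → Env G → Env G2
  | _, _, _, .nil, _ => .nil
  | _, _, _, .skip s, .skip V => .skip (V.split2 s)
  | _, _, _, .left s, .cons _ V => .skip (V.split2 s)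
  | _, _, _, .right s, .cons v V => .cons v (V.split2 s)

/-- A generic cost model: one fixed cost constant per syntactic construct. -/
structure CostModel : Type where
  kvar : ℕ
  knull : ℕ
  kinj1 : ℕ
  kinj2 : ℕ
  kcase : ℕ
  kpair : ℕ
  kletp : ℕ
  klam : ℕ
  kapp : ℕ
  knil : ℕ
  kcons : ℕ
  krec : ℕ
  krecord : ℕ
  kproj1 : ℕ
  kproj2 : ℕ
  kempty : ℕ
  kpush : ℕ
  kpop : ℕ
  kleaf : ℕ
  knode : ℕ
  ktrec : ℕ

mutual
  /-- The big-step operational cost semantics `V ⊢ M ⇓^c v`: term `M`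
  evaluates under environment `V` to value `v` with cost `c`.  Each rule adds
  the cost constant of its construct and sums the costs of its premises.  The
  step body of the list recursor is evaluated under an environment containing
  only the diamond value, the head value, and the recursive result; the step
  body of the tree recursor under only the diamond value, the label, and the
  two recursive results. -/
  inductive Evals (K : CostModel) : {G : Ctx} → {A : Tp} → Env G → Term G A → ℕ → Value A → Prop
    | var {G A} {V : Env G} (l : Lk G A) :
        Evals K V (.var l) K.kvar (V.lk l)
    | null {G} {V : Env G} : Evals K V .null K.knull .null
    | inj1 {G A B} {V : Env G} {M : Term G A} {c v} :
        Evals K V M c v → Evals K V (.inj1 (B := B) M) (c + K.kinj1) (.inj1 v)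
    | inj2 {G A B} {V : Env G} {M : Term G B} {c v} :
        Evals K V M c v → Evals K V (.inj2 (A := A) M) (c + K.kinj2) (.inj2 v)
    | case1 {G G1 G2 A B C} {V : Env G} {s : Split G G1 G2} {M : Term G1 (.sum A B)}
        {N1 : Term (some A :: G2) C} {N2 : Term (some B :: G2) C} {c c' v w} :
        Evals K (V.split1 s) M c (.inj1 v) →
        Evals K (.cons v (V.split2 s)) N1 c' w →
        Evals K V (.scase s M N1 N2) (c + c' + K.kcase) w
    | case2 {G G1 G2 A B C} {V : Env G} {s : Split G G1 G2} {M : Term G1 (.sum A B)}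
        {N1 : Term (some A :: G2) C} {N2 : Term (some B :: G2) C} {c c' v w} :
        Evals K (V.split1 s) M c (.inj2 v) →
        Evals K (.cons v (V.split2 s)) N2 c' w →
        Evals K V (.scase s M N1 N2) (c + c' + K.kcase) w
    | pair {G G1 G2 A B} {V : Env G} {s : Split G G1 G2} {M1 : Term G1 A}
        {M2 : Term G2 B} {c1 c2 v1 v2} :
        Evals K (V.split1 s) M1 c1 v1 → Evals K (V.split2 s) M2 c2 v2 →
        Evals K V (.pair s M1 M2) (c1 + c2 + K.kpair) (.pair v1 v2)
    | letp {G G1 G2 A B C} {V : Env G} {s : Split G G1 G2} {M : Term G1 (.tens A B)}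
        {N : Term (some B :: some A :: G2) C} {c c' v1 v2 w} :
        Evals K (V.split1 s) M c (.pair v1 v2) →
        Evals K (.cons v2 (.cons v1 (V.split2 s))) N c' w →
        Evals K V (.letp s M N) (c + c' + K.kletp) w
    | lam {G A B} {V : Env G} {M : Term (some A :: G) B} :
        Evals K V (.lam M) K.klam (.clos V M)
    | app {G G1 G2 G' A B} {V : Env G} {s : Split G G1 G2} {M : Term G1 (.arr A B)}
        {N : Term G2 A} {W : Env G'} {M' : Term (some A :: G') B} {c1 c2 c3 v w} :
        Evals K (V.split1 s) M c1 (.clos W M') →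
        Evals K (V.split2 s) N c2 v →
        Evals K (.cons v W) M' c3 w →
        Evals K V (.app s M N) (c1 + c2 + c3 + K.kapp) w
    | nil {G A} {V : Env G} : Evals K V (.nil (A := A)) K.knil .nil
    | cons {G G1 G23 G2 G3 A} {V : Env G} {s1 : Split G G1 G23} {s2 : Split G23 G2 G3}
        {Md : Term G1 .dia} {Mh : Term G2 A} {Mt : Term G3 (.list A)} {cd ch ct vh vt} :
        Evals K (V.split1 s1) Md cd .dia →
        Evals K ((V.split2 s1).split1 s2) Mh ch vh →
        Evals K ((V.split2 s1).split2 s2) Mt ct vt →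
        Evals K V (.cons s1 s2 Md Mh Mt) (cd + ch + ct + K.kcons) (.cons vh vt)
    | lrec {G G1 G2 A B} {V : Env G} {s : Split G G1 G2} {M : Term G1 (.list A)}
        {N1 : Term G2 B} {N2 : Term [some B, some A, some .dia] B} {c cr lv w} :
        Evals K (V.split1 s) M c lv →
        EvalsRec K (V.split2 s) N1 N2 lv cr w →
        Evals K V (.lrec s M N1 N2) (c + cr) w
    | record {G A B} {V : Env G} {M1 : Term G A} {M2 : Term G B} :
        Evals K V (.record M1 M2) K.krecord (.record V M1 M2)
    | proj1 {G G' A B} {V : Env G} {M : Term G (.prod A B)} {W : Env G'}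
        {M1 : Term G' A} {M2 : Term G' B} {c c' v} :
        Evals K V M c (.record W M1 M2) → Evals K W M1 c' v →
        Evals K V (.proj1 M) (c + c' + K.kproj1) v
    | proj2 {G G' A B} {V : Env G} {M : Term G (.prod A B)} {W : Env G'}
        {M1 : Term G' A} {M2 : Term G' B} {c c' v} :
        Evals K V M c (.record W M1 M2) → Evals K W M2 c' v →
        Evals K V (.proj2 M) (c + c' + K.kproj2) v
    | empty {G A} {V : Env G} : Evals K V (.empty (A := A)) K.kempty .sempty
    | push {G G1 G2 A} {V : Env G} {s : Split G G1 G2} {Mh : Term G1 A}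
        {Mt : Term G2 (.stack A)} {ch ct vh vt} :
        Evals K (V.split1 s) Mh ch vh → Evals K (V.split2 s) Mt ct vt →
        Evals K V (.push s Mh Mt) (ch + ct + K.kpush) (.spush vh vt)
    | pop1 {G G1 G2 A B} {V : Env G} {s : Split G G1 G2} {M : Term G1 (.stack A)}
        {N1 : Term G2 B} {N2 : Term (some (.stack A) :: some A :: G2) B} {c c' w} :
        Evals K (V.split1 s) M c .sempty →
        Evals K (V.split2 s) N1 c' w →
        Evals K V (.pop s M N1 N2) (c + c' + K.kpop) w
    | pop2 {G G1 G2 A B} {V : Env G} {s : Split G G1 G2} {M : Term G1 (.stack A)}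
        {N1 : Term G2 B} {N2 : Term (some (.stack A) :: some A :: G2) B} {c c' vh vt w} :
        Evals K (V.split1 s) M c (.spush vh vt) →
        Evals K (.cons vt (.cons vh (V.split2 s))) N2 c' w →
        Evals K V (.pop s M N1 N2) (c + c' + K.kpop) w
    | leaf {G A} {V : Env G} : Evals K V (.leaf (A := A)) K.kleaf .leaf
    | node {G G1 G234 G2 G34 G3 G4 A} {V : Env G} {s1 : Split G G1 G234}
        {s2 : Split G234 G2 G34} {s3 : Split G34 G3 G4} {Md : Term G1 .dia}
        {Mx : Term G2 A} {Ml : Term G3 (.tree A)} {Mr : Term G4 (.tree A)}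
        {cd cx cl cr vx vl vr} :
        Evals K (V.split1 s1) Md cd .dia →
        Evals K ((V.split2 s1).split1 s2) Mx cx vx →
        Evals K (((V.split2 s1).split2 s2).split1 s3) Ml cl vl →
        Evals K (((V.split2 s1).split2 s2).split2 s3) Mr cr vr →
        Evals K V (.node s1 s2 s3 Md Mx Ml Mr) (cd + cx + cl + cr + K.knode) (.node vx vl vr)
    | trec {G A B} {V : Env G} {M : Term G (.tree A)} {N1 : Term ([] : Ctx) B}
        {N2 : Term [some B, some B, some A, some .dia] B} {c cr tv w} :
        Evals K V M c tv →
        EvalsTree K N1 N2 tv cr w →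
        Evals K V (.trec M N1 N2) (c + cr) w

  /-- Iteration of the list recursor over a list value. -/
  inductive EvalsRec (K : CostModel) : {G2 : Ctx} → {A B : Tp} → Env G2 → Term G2 B →
      Term [some B, some A, some .dia] B → Value (.list A) → ℕ → Value B → Prop
    | nil {G2 A B} {V : Env G2} {N1 : Term G2 B}
        {N2 : Term [some B, some A, some .dia] B} {c w} :
        Evals K V N1 c w → EvalsRec K V N1 N2 .nil (c + K.krec) w
    | cons {G2 A B} {V : Env G2} {N1 : Term G2 B}
        {N2 : Term [some B, some A, some .dia] B} {vh vt ct c' wt w} :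
        EvalsRec K V N1 N2 vt ct wt →
        Evals K (.cons wt (.cons vh (.cons .dia .nil))) N2 c' w →
        EvalsRec K V N1 N2 (.cons vh vt) (ct + c' + K.kvar + K.krec) w

  /-- Iteration of the tree recursor over a tree value. -/
  inductive EvalsTree (K : CostModel) : {A B : Tp} → Term ([] : Ctx) B →
      Term [some B, some B, some A, some .dia] B → Value (.tree A) → ℕ → Value B → Prop
    | leaf {A B} {N1 : Term ([] : Ctx) B}
        {N2 : Term [some B, some B, some A, some .dia] B} {c w} :
        Evals K .nil N1 c w → EvalsTree K N1 N2 (.leaf (A := A)) (c + K.ktrec) w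
    | node {A B} {N1 : Term ([] : Ctx) B}
        {N2 : Term [some B, some B, some A, some .dia] B} {vx vl vr cl cr c' wl wr w} :
        EvalsTree K N1 N2 vl cl wl →
        EvalsTree K N1 N2 vr cr wr →
        Evals K (.cons wr (.cons wl (.cons vx (.cons .dia .nil)))) N2 c' w →
        EvalsTree K N1 N2 (.node vx vl vr) (cl + cr + c' + 2 * K.kvar + K.ktrec) w
end

/-! ## Denotational semantics -/

/-- Binary trees with node labels in `α`. -/
inductive BT (α : Type) : Type
  | leaf : BT α
  | node (x : α) (l r : BT α) : BT α

/-- Iteration over a binary tree. -/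
def BT.iter {α β : Type} (b : β) (f : α → β → β → β) : BT α → β
  | .leaf => b
  | .node x l r => f x (BT.iter b f l) (BT.iter b f r)

/-- Set-theoretic denotational semantics of types. -/
def Tp.sem : Tp → Type
  | .dia => Unit
  | .unit => Unit
  | .sum A B => A.sem ⊕ B.sem
  | .tens A B => A.sem × B.sem
  | .arr A B => A.sem → B.sem
  | .list A => List A.sem
  | .prod A B => A.sem × B.sem
  | .stack A => List A.sem
  | .tree A => BT A.sem

/-- Denotation of contexts. -/
def CtxSem : Ctx → Type
  | [] => PUnit
  | some A :: G => Tp.sem A × CtxSem G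
  | none :: G => CtxSem G

def Lk.sem : {G : Ctx} → {A : Tp} → Lk G A → CtxSem G → Tp.sem A
  | some _ :: _, _, .here, η => η.1
  | some _ :: _, _, .there l, η => Lk.sem l η.2
  | none :: _, _, .there l, η => Lk.sem l η

def Split.sub1 : {G G1 G2 : Ctx} → Split G G1 G2 → CtxSem G → CtxSem G1
  | _, _, _, .nil, _ => PUnit.unit
  | _, _, _, .skip s, η => s.sub1 η
  | _, _, _, .left s, η => (η.1, s.sub1 η.2)
  | _, _, _, .right s, η => s.sub1 η.2

def Split.sub2 : {G G1 G2 : Ctx} → Split G G1 G2 → CtxSem G → CtxSem G2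
  | _, _, _, .nil, _ => PUnit.unit
  | _, _, _, .skip s, η => s.sub2 η
  | _, _, _, .left s, η => s.sub2 η.2
  | _, _, _, .right s, η => (η.1, s.sub2 η.2)

/-- Denotational semantics of terms: `cons` and `node` ignore their diamond
arguments, and list/tree elimination is interpreted by iteration. -/
def Term.sem : {G : Ctx} → {A : Tp} → Term G A → CtxSem G → Tp.sem A
  | _, _, .var l, η => l.sem η
  | _, _, .null, _ => ()
  | _, _, .inj1 M, η => Sum.inl (M.sem η)
  | _, _, .inj2 M, η => Sum.inr (M.sem η)
  | _, _, .scase s M N1 N2, η =>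
      match M.sem (s.sub1 η) with
      | Sum.inl a => N1.sem (a, s.sub2 η)
      | Sum.inr b => N2.sem (b, s.sub2 η)
  | _, _, .pair s M1 M2, η => (M1.sem (s.sub1 η), M2.sem (s.sub2 η))
  | _, _, .letp s M N, η => N.sem ((M.sem (s.sub1 η)).2, ((M.sem (s.sub1 η)).1, s.sub2 η))
  | _, _, .lam M, η => fun a => M.sem (a, η)
  | _, _, .app s M N, η => M.sem (s.sub1 η) (N.sem (s.sub2 η))
  | _, _, .nil, _ => []
  | _, _, .cons s1 s2 _ Mh Mt, η =>
      Mh.sem (s2.sub1 (s1.sub2 η)) :: Mt.sem (s2.sub2 (s1.sub2 η))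
  | _, _, .lrec s M N1 N2, η =>
      (M.sem (s.sub1 η)).foldr (fun a b => N2.sem (b, (a, ((), PUnit.unit)))) (N1.sem (s.sub2 η))
  | _, _, .record M1 M2, η => (M1.sem η, M2.sem η)
  | _, _, .proj1 M, η => (M.sem η).1
  | _, _, .proj2 M, η => (M.sem η).2
  | _, _, .empty, _ => []
  | _, _, .push s Mh Mt, η => Mh.sem (s.sub1 η) :: Mt.sem (s.sub2 η)
  | _, _, .pop s M N1 N2, η =>
      match M.sem (s.sub1 η) with
      | [] => N1.sem (s.sub2 η)
      | h :: t => N2.sem (t, (h, s.sub2 η))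
  | _, _, .leaf, _ => .leaf
  | _, _, .node s1 s2 s3 _ Mx Ml Mr, η =>
      .node (Mx.sem (s2.sub1 (s1.sub2 η)))
        (Ml.sem (s3.sub1 (s2.sub2 (s1.sub2 η))))
        (Mr.sem (s3.sub2 (s2.sub2 (s1.sub2 η))))
  | _, _, .trec M N1 N2, η =>
      BT.iter (N1.sem PUnit.unit)
        (fun x l r => N2.sem (r, (l, (x, ((), PUnit.unit))))) (M.sem η)

mutual
  /-- Denotational semantics of values. -/
  def Value.sem : {A : Tp} → Value A → A.sem
    | _, .dia => ()
    | _, .null => ()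
    | _, .record V M1 M2 => (M1.sem V.sem, M2.sem V.sem)
    | _, .inj1 v => Sum.inl v.sem
    | _, .inj2 v => Sum.inr v.sem
    | _, .pair v1 v2 => (v1.sem, v2.sem)
    | _, .clos V M => fun a => M.sem (a, V.sem)
    | _, .sempty => []
    | _, .spush vh vt => vh.sem :: vt.sem
    | _, .nil => []
    | _, .cons vh vt => vh.sem :: vt.sem
    | _, .leaf => .leaf
    | _, .node v vl vr => .node v.sem vl.sem vr.sem

  /-- Denotational semantics of environments. -/
  def Env.sem : {G : Ctx} → Env G → CtxSem G
    | _, .nil => PUnit.unit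
    | _, .cons v V => (v.sem, V.sem)
    | _, .skip V => V.sem
end

/-! Simultaneous induction on the three evaluation judgements: the judgements for the list and
tree recursors compute `List.foldr` and `BT.iter` of the step denotation. Every other rule is
matched by the corresponding clause of `Term.sem` once one knows that splitting an environment
commutes with taking its denotation. -/

theorem Env.sem_lk : {G : Ctx} → {A : Tp} → (V : Env G) → (l : Lk G A) →
    (V.lk l).sem = l.sem V.sem
  | _, _, .cons _ _, .here => rfl
  | _, _, .cons _ V, .there l => V.sem_lk l
  | _, _, .skip V, .there l => V.sem_lk l

theorem Env.sem_split1 : {G G1 G2 : Ctx} → (V : Env G) → (s : Split G G1 G2) →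
    (V.split1 s).sem = s.sub1 V.sem
  | _, _, _, _, .nil => rfl
  | _, _, _, .skip V, .skip s => V.sem_split1 s
  | _, _, _, .cons v V, .left s => congrArg (v.sem, ·) (V.sem_split1 s)
  | _, _, _, .cons _ V, .right s => V.sem_split1 s

theorem Env.sem_split2 : {G G1 G2 : Ctx} → (V : Env G) → (s : Split G G1 G2) →
    (V.split2 s).sem = s.sub2 V.sem
  | _, _, _, _, .nil => rfl
  | _, _, _, .skip V, .skip s => V.sem_split2 s
  | _, _, _, .cons _ V, .left s => V.sem_split2 s
  | _, _, _, .cons v V, .right s => congrArg (v.sem, ·) (V.sem_split2 s)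

mutual

theorem Evals.sem_eq {K : CostModel} {G : Ctx} {A : Tp} {V : Env G} {M : Term G A} {c : ℕ}
    {v : Value A} : Evals K V M c v → v.sem = M.sem V.sem
  | .var l => V.sem_lk l
  | .null => rfl
  | .inj1 h => congrArg Sum.inl h.sem_eq
  | .inj2 h => congrArg Sum.inr h.sem_eq
  | .case1 hM hN | .case2 hM hN => by
      rw [hN.sem_eq, Term.sem, ← V.sem_split1, ← hM.sem_eq, ← V.sem_split2]; rfl
  | .pair h1 h2 => by
      rw [Term.sem, ← V.sem_split1, ← V.sem_split2, ← h1.sem_eq, ← h2.sem_eq]; rfl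
  | .letp hM hN => by
      rw [hN.sem_eq, Term.sem, ← V.sem_split1, ← hM.sem_eq, ← V.sem_split2]; rfl
  | .lam => rfl
  | .app hM hN hB => by
      rw [hB.sem_eq, Term.sem, ← V.sem_split1, ← hM.sem_eq, ← V.sem_split2, ← hN.sem_eq]
      rfl
  | .nil => rfl
  | .cons _ hh ht => by
      rw [Term.sem, ← Env.sem_split2, ← Env.sem_split1, ← Env.sem_split2, ← hh.sem_eq,
        ← ht.sem_eq]; rfl
  | .lrec hM hR => by
      rw [hR.sem_eq, Term.sem, ← V.sem_split1, ← hM.sem_eq, ← V.sem_split2]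
  | .record => rfl
  | .proj1 hM h1 => by rw [h1.sem_eq, Term.sem, ← hM.sem_eq]; rfl
  | .proj2 hM h2 => by rw [h2.sem_eq, Term.sem, ← hM.sem_eq]; rfl
  | .empty => rfl
  | .push hh ht => by
      rw [Term.sem, ← V.sem_split1, ← V.sem_split2, ← hh.sem_eq, ← ht.sem_eq]; rfl
  | .pop1 hM hN | .pop2 hM hN => by
      rw [hN.sem_eq, Term.sem, ← V.sem_split1, ← hM.sem_eq, ← V.sem_split2]; rfl
  | .leaf => rfl
  | .node _ hx hl hr => by
      rw [Term.sem, ← Env.sem_split2, ← Env.sem_split1, ← Env.sem_split2, ← Env.sem_split1,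
        ← Env.sem_split2, ← hx.sem_eq, ← hl.sem_eq, ← hr.sem_eq]; rfl
  | .trec hM hT => by rw [hT.sem_eq, Term.sem, ← hM.sem_eq]

theorem EvalsRec.sem_eq {K : CostModel} {G2 : Ctx} {A B : Tp} {V : Env G2} {N1 : Term G2 B}
    {N2 : Term [some B, some A, some .dia] B} {lv : Value (.list A)} {c : ℕ} {w : Value B} :
    EvalsRec K V N1 N2 lv c w →
      w.sem = lv.sem.foldr (fun a b => N2.sem (b, (a, ((), PUnit.unit)))) (N1.sem V.sem)
  | .nil h => h.sem_eq
  | .cons ht h => by rw [h.sem_eq]; simp only [Env.sem, ht.sem_eq]; rfl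

theorem EvalsTree.sem_eq {K : CostModel} {A B : Tp} {N1 : Term ([] : Ctx) B}
    {N2 : Term [some B, some B, some A, some .dia] B} {tv : Value (.tree A)} {c : ℕ}
    {w : Value B} : EvalsTree K N1 N2 tv c w →
      w.sem = BT.iter (N1.sem PUnit.unit)
        (fun x l r => N2.sem (r, (l, (x, ((), PUnit.unit))))) tv.sem
  | .leaf h => h.sem_eq
  | .node hl hr h => by rw [h.sem_eq]; simp only [Env.sem, hl.sem_eq, hr.sem_eq]; rfl

end

/-- **Coherence of operational and denotational semantics**: if `Γ ⊢ M : A`,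
the environment `V` is well-typed for `Γ`, and `V ⊢ M ⇓^c v`, then
`⟦v⟧ = ⟦M⟧_{⟦V⟧}`. -/
theorem coherence (K : CostModel) {G : Ctx} {A : Tp}
    (M : Term G A) (V : Env G) (c : ℕ) (v : Value A)
    (h : Evals K V M c v) :
    v.sem = M.sem V.sem :=
  h.sem_eq
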